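/- Define u : ℂ → ℝ ∪ {−∞} by u(z) = Σ_{k=1}^∞ (1/k²)·log(|z − 1/k| + e^{−k³}) (the series converges at every point). Then for every integer k ≥ 1 one has u(1/k) ≤ −k + (π²/6)·log 2. Consequently, u is not bounded below on any neighborhood of 0, even though u(0) is a finite real number; that is, 0 belongs to the unbounded locus of u while u is finite at 0. -/

import Mathlib

/-!
At `z = 1/k` the `k`-th summand is `(1/k²)·log(e^{-k³}) = -k`, while every summand is at most
`(1/j²)·log 2` because `|1/k - 1/j| + e^{-j³} ≤ 2`; summing against `∑ 1/j² = π²/6` gives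
`u(1/k) ≤ -k + (π²/6)·log 2`, and `1/k → 0`. Convergence everywhere: for large `j` the argument of
the logarithm lies between `1/j` and `|z| + 2`, so the `j`-th summand is `O(log j / j²)`.
-/

/-- The `k`-th term of Demailly's example: `(1/k²)·log(|z − 1/k| + e^{−k³})`. -/
noncomputable def demaillyTerm (k : ℕ) (z : ℂ) : ℝ :=
  (1 / (k : ℝ) ^ 2) * Real.log (‖z - 1 / (k : ℂ)‖ + Real.exp (-(k : ℝ) ^ 3))

/-- Demailly's example `u(z) = ∑_{k=1}^∞ (1/k²)·log(|z − 1/k| + e^{−k³})`. -/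
noncomputable def demaillyU (z : ℂ) : ℝ := ∑' k : ℕ, demaillyTerm (k + 1) z

open Real Filter Topology

lemma summable_log_div_sq : Summable fun n : ℕ => log n / (n : ℝ) ^ 2 := by
  refine ((summable_nat_rpow.2 (by norm_num : -(3 / 2) < (-1 : ℝ))).mul_left 2).of_nonneg_of_le
    (fun n => by positivity) fun n => ?_
  rcases n.eq_zero_or_pos with rfl | hn
  · simp
  have hn' : (0 : ℝ) < n := Nat.cast_pos.2 hn
  calc log n / (n : ℝ) ^ 2 ≤ (n : ℝ) ^ (1 / 2 : ℝ) / (1 / 2) / (n : ℝ) ^ 2 := by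
        gcongr; exact log_le_rpow_div hn'.le (by norm_num)
    _ = 2 * (n : ℝ) ^ (-(3 / 2) : ℝ) := by
        rw [show (-(3 / 2) : ℝ) = 1 / 2 - (2 : ℕ) by norm_num, rpow_sub hn', rpow_natCast]
        ring

lemma norm_sub_add_exp_le (z : ℂ) (j : ℕ) :
    ‖z - 1 / (j : ℂ)‖ + exp (-(j : ℝ) ^ 3) ≤ ‖z‖ + 2 := by
  have h₁ : ‖1 / (j : ℂ)‖ ≤ 1 := by simpa using Nat.cast_inv_le_one j
  have h₂ : exp (-(j : ℝ) ^ 3) ≤ 1 := exp_le_one_iff.2 (by simp only [neg_nonpos]; positivity)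
  linarith [norm_sub_le z (1 / (j : ℂ))]

lemma eventually_one_div_le_norm_sub_add_exp (z : ℂ) :
    ∀ᶠ j : ℕ in atTop, 1 / (j : ℝ) ≤ ‖z - 1 / (j : ℂ)‖ + exp (-(j : ℝ) ^ 3) := by
  have hsmall : ∀ᶠ j : ℕ in atTop, z = 0 ∨ 2 / (j : ℝ) < ‖z‖ := by
    rcases eq_or_ne z 0 with hz | hz
    · exact .of_forall fun _ => .inl hz
    · exact ((tendsto_const_div_atTop_nhds_zero_nat 2).eventually
        (gt_mem_nhds (norm_pos_iff.2 hz))).mono fun _ => .inr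
  filter_upwards [hsmall] with j hj
  have hnorm : ‖1 / (j : ℂ)‖ = 1 / j := by simp
  have := exp_pos (-(j : ℝ) ^ 3)
  rcases hj with rfl | hj
  · rw [zero_sub, norm_neg, hnorm]; linarith
  · have := norm_sub_norm_le z (1 / (j : ℂ))
    rw [hnorm] at this
    linarith [show 2 / (j : ℝ) = 2 * (1 / j) by ring]

lemma eventually_abs_demaillyTerm_le (z : ℂ) :
    ∀ᶠ j : ℕ in atTop, |demaillyTerm j z| ≤ (log j + log (‖z‖ + 2)) / (j : ℝ) ^ 2 := by
  filter_upwards [eventually_one_div_le_norm_sub_add_exp z, eventually_ge_atTop 1] with j hlow hj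
  have hj' : (0 : ℝ) < j := by exact_mod_cast hj
  have hpos : 0 < 1 / (j : ℝ) := by positivity
  have hupper := log_le_log (hpos.trans_le hlow) (norm_sub_add_exp_le z j)
  have hlower := log_le_log hpos hlow
  rw [one_div, log_inv] at hlower
  have : 0 ≤ log (‖z‖ + 2) := log_nonneg (by linarith [norm_nonneg z])
  rw [demaillyTerm, abs_mul, abs_of_pos (by positivity), one_div_mul_eq_div]
  gcongr
  exact abs_le.2 ⟨by linarith [log_natCast_nonneg j], by linarith [log_natCast_nonneg j]⟩

lemma summable_demaillyTerm (z : ℂ) : Summable fun j => demaillyTerm j z := by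
  have hC : Summable fun j : ℕ => log (‖z‖ + 2) / (j : ℝ) ^ 2 := by
    simpa only [div_eq_mul_one_div (log _)] using
      (summable_one_div_nat_pow.2 one_lt_two).mul_left (log (‖z‖ + 2))
  refine .of_norm_bounded_eventually_nat (summable_log_div_sq.add hC) ?_
  simpa only [Real.norm_eq_abs, add_div] using eventually_abs_demaillyTerm_le z

lemma hasSum_demaillyTerm (z : ℂ) : HasSum (fun j => demaillyTerm j z) (demaillyU z) := by
  have h := (summable_demaillyTerm z).hasSum
  -- the `j = 0` term is `0` because `1 / (0 : ℝ) = 0`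
  rwa [(summable_demaillyTerm z).tsum_eq_zero_add, demaillyTerm, Nat.cast_zero,
    zero_pow two_ne_zero, div_zero, zero_mul, zero_add] at h

lemma demaillyTerm_one_div_self (k : ℕ) : demaillyTerm k (1 / k) = -k := by
  rcases eq_or_ne k 0 with rfl | hk
  · simp [demaillyTerm]
  · rw [demaillyTerm, sub_self, norm_zero, zero_add, log_exp]
    field_simp

lemma demaillyTerm_one_div_le (j k : ℕ) : demaillyTerm j (1 / k) ≤ 1 / (j : ℝ) ^ 2 * log 2 := by
  have hdist : ‖1 / (k : ℂ) - 1 / (j : ℂ)‖ ≤ 1 := by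
    rw [show 1 / (k : ℂ) - 1 / j = ((1 / k - 1 / j : ℝ) : ℂ) by push_cast; ring, Complex.norm_real,
      Real.norm_eq_abs]
    exact abs_sub_le_of_nonneg_of_le (by positivity) (by simpa using Nat.cast_inv_le_one k)
      (by positivity) (by simpa using Nat.cast_inv_le_one j)
  have hexp : exp (-(j : ℝ) ^ 3) ≤ 1 := exp_le_one_iff.2 (by simp only [neg_nonpos]; positivity)
  unfold demaillyTerm
  gcongr
  linarith

theorem demaillyU_one_div_add_le (k : ℕ) : demaillyU (1 / k) + k ≤ π ^ 2 / 6 * log 2 := by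
  have h := (hasSum_demaillyTerm (1 / k)).update k 0
  rw [demaillyTerm_one_div_self, zero_sub, neg_neg, add_comm] at h
  refine hasSum_le (fun j => ?_) h (hasSum_zeta_two.mul_right (log 2))
  rcases eq_or_ne j k with rfl | hj
  · rw [Function.update_self]; positivity
  · rw [Function.update_of_ne hj]; exact demaillyTerm_one_div_le j k

theorem frequently_demaillyU_lt (m : ℝ) : ∃ᶠ z in 𝓝 (0 : ℂ), demaillyU z < m := by
  refine tendsto_one_div_atTop_nhds_zero_nat.frequently (Eventually.frequently ?_)
  filter_upwards [eventually_gt_atTop ⌈π ^ 2 / 6 * log 2 - m⌉₊] with k hk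
  linarith [demaillyU_one_div_add_le k, Nat.lt_of_ceil_lt hk]

/-- For `u(z) = ∑_{k=1}^∞ (1/k²)·log(|z − 1/k| + e^{−k³})` (the series converges at every
point): for every integer `k ≥ 1` one has `u(1/k) ≤ −k + (π²/6)·log 2`.  Consequently `u`
is not bounded below on any neighborhood of `0` (so `0` lies in the unbounded locus of
`u`), even though the series at `0` is summable, i.e. `u(0)` is a finite real number. -/
theorem chern_stmt9 :
    (∀ k : ℕ, 1 ≤ k →
      demaillyU (1 / (k : ℂ)) ≤ -(k : ℝ) + (Real.pi ^ 2 / 6) * Real.log 2) ∧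
    (∀ U ∈ nhds (0 : ℂ), ∀ m : ℝ, ∃ z ∈ U, demaillyU z < m) ∧
    Summable (fun k : ℕ => demaillyTerm (k + 1) 0) :=
  ⟨fun k _ => by linarith [demaillyU_one_div_add_le k],
    fun _ hU m => frequently_iff.1 (frequently_demaillyU_lt m) hU,
    (summable_nat_add_iff 1).2 (summable_demaillyTerm 0)⟩
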